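/- arXiv:2309.02226 — 3 statements merged into one kernel-verified Lean document; each statement's English description precedes it below -/
import Mathlib

section
/- Let $u : \mathbb{R} \to \operatorname{Sym}(n-1)$ satisfy the Riccati equation $u' + u^2 + R = 0$ with symmetric $R(t)$, and suppose $\operatorname{tr} u(t) \equiv h$ is constant. Then $\operatorname{tr} R(t) = -\operatorname{tr}(u(t)^2) \le -h^2/(n-1)$ for all $t$. -/
attribute [local instance] Matrix.frobeniusNormedAddCommGroup Matrix.frobeniusNormedSpace

/-- If a differentiable family `u` of symmetric `(n-1) × (n-1)` real matrices
satisfies the Riccati equation `u' + u² + R = 0` with `R t` symmetric and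
`tr (u t) ≡ h` constant, then `tr (R t) = -tr (u t ²) ≤ -h²/(n-1)` for all `t`. -/
theorem stmt6 (n : ℕ) (h : ℝ)
    (u u' R : ℝ → Matrix (Fin (n - 1)) (Fin (n - 1)) ℝ)
    (husym : ∀ t, (u t).IsHermitian) (hRsym : ∀ t, (R t).IsHermitian)
    (hderiv : ∀ t, HasDerivAt u (u' t) t)
    (hric : ∀ t, u' t + u t ^ 2 + R t = 0)
    (htr : ∀ t, (u t).trace = h) :
    ∀ t, (R t).trace = -(u t ^ 2).trace ∧ (R t).trace ≤ -(h ^ 2 / ((n : ℝ) - 1)) := by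
  intro t
  -- trace of u' is 0
  have htrL : ∀ s, HasDerivAt (fun s => (u s).trace) (u' s).trace s := by
    intro s
    exact ((Matrix.traceLinearMap (Fin (n-1)) ℝ ℝ).toContinuousLinearMap.hasFDerivAt).comp_hasDerivAt s (hderiv s)
  have htru' : (u' t).trace = 0 := by
    have h1 : HasDerivAt (fun s => (u s).trace) 0 t := by
      have : (fun s => (u s).trace) = fun _ => h := funext htr
      rw [this]; exact hasDerivAt_const t h
    exact (htrL t).unique h1
  have hR : (R t).trace = -(u t ^ 2).trace := by
    have := hric t
    have h2 : (u' t + u t ^ 2 + R t).trace = (0 : Matrix (Fin (n-1)) (Fin (n-1)) ℝ).trace := by rw [this]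
    simp only [Matrix.trace_add, Matrix.trace_zero, htru'] at h2
    linarith
  refine ⟨hR, ?_⟩
  -- tr(u²) = Σᵢⱼ uᵢⱼ²
  have hsq : (u t ^ 2).trace = ∑ i, ∑ j, (u t) i j ^ 2 := by
    rw [sq, Matrix.trace, Finset.sum_congr rfl]
    intro i _
    rw [Matrix.diag_apply, Matrix.mul_apply]
    refine Finset.sum_congr rfl fun j _ => ?_
    have hs := (husym t).apply j i
    simp only [Matrix.conjTranspose_apply, RCLike.star_def, starRingEnd_apply, star_trivial] at hs
    rw [sq, ← hs]
  have hdiag : ∑ i, (u t) i i ^ 2 ≤ ∑ i, ∑ j, (u t) i j ^ 2 := by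
    refine Finset.sum_le_sum fun i _ => ?_
    have : (u t) i i ^ 2 = ∑ j ∈ {i}, (u t) i j ^ 2 := by simp
    rw [this]
    exact Finset.sum_le_sum_of_subset_of_nonneg (Finset.subset_univ _)
      (fun j _ _ => sq_nonneg _)
  have hcs : h ^ 2 ≤ (n - 1 : ℕ) * ∑ i, (u t) i i ^ 2 := by
    have := sq_sum_le_card_mul_sum_sq (s := (Finset.univ : Finset (Fin (n-1))))
      (f := fun i => (u t) i i)
    simpa [Matrix.trace, Matrix.diag_apply, ← htr t] using this
  rw [hR, hsq]
  rcases le_or_gt n 1 with hn | hn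
  · -- Fin (n-1) is empty
    have hn0 : n - 1 = 0 := by omega
    haveI : IsEmpty (Fin (n - 1)) := by rw [hn0]; infer_instance
    have hh : h = 0 := by
      have := htr t
      rw [Matrix.trace, Finset.univ_eq_empty] at this
      simpa using this.symm
    subst hh
    simp [Finset.univ_eq_empty]
  · have hpos : (0 : ℝ) < (n : ℝ) - 1 := by
      have : (2 : ℝ) ≤ n := by exact_mod_cast hn
      linarith
    have hcard : ((n - 1 : ℕ) : ℝ) = (n : ℝ) - 1 := by
      have : (1 : ℕ) ≤ n := by omega
      push_cast [this]
      ring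
    rw [hcard] at hcs
    have h1 : h ^ 2 / ((n : ℝ) - 1) ≤ ∑ i, (u t) i i ^ 2 :=
      (div_le_iff₀ hpos).mpr (by linarith [hcs])
    linarith [hdiag]
end

section
/- Let $\{e_1, e_2, e_3\}$ be an orthonormal frame on a Riemannian 3-manifold such that $\Gamma_{ij}^k = g(\nabla_{e_i}e_j, e_k) = 0$ whenever $i,j,k$ are pairwise distinct, $\nabla_{e_1} e_1 = 0$, and $\operatorname{div}(e_1) = 0$. Suppose moreover $g(R(e_2,e_1)e_1, e_2) = -g(R(e_3,e_1)e_1, e_3)$. Then $\Gamma_{21}^2 = \Gamma_{31}^3 = 0$ at every point where the ODE relation $0 = e_1(\Gamma_{21}^2 + \Gamma_{31}^3) + (\Gamma_{21}^2)^2 + (\Gamma_{31}^3)^2$ holds, and consequently $K(e_1,e_2) = K(e_1,e_3) = 0$. -/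
/-- Lemma 2.6 (key computation, along a geodesic with parameter `t`, so that
`e₁` acts as `d/dt`).  Write `f = Γ₂₁² ∘ γ` and `h = Γ₃₁³ ∘ γ`; the curvature
computation gives `K(e₁,e₂) = -(f' + f²)` and `K(e₁,e₃) = -(h' + h²)`.
If `div e₁ = f + h ≡ 0` and the ODE relation
`0 = (f + h)' + f² + h²` holds, then `f ≡ 0`, `h ≡ 0`, and consequently
`K(e₁,e₂) ≡ 0` and `K(e₁,e₃) ≡ 0`. -/
theorem stmt9 (f h K12 K13 : ℝ → ℝ)
    (hf : Differentiable ℝ f) (hh : Differentiable ℝ h)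
    (hdiv : ∀ t, f t + h t = 0)
    (hode : ∀ t, 0 = deriv (fun s => f s + h s) t + f t ^ 2 + h t ^ 2)
    (hK12 : ∀ t, K12 t = -(deriv f t + f t ^ 2))
    (hK13 : ∀ t, K13 t = -(deriv h t + h t ^ 2)) :
    (∀ t, f t = 0 ∧ h t = 0) ∧ (∀ t, K12 t = 0 ∧ K13 t = 0) := by
  have hzero : ∀ t, f t = 0 ∧ h t = 0 := by
    intro t
    have hd : deriv (fun s => f s + h s) t = 0 := by
      have : (fun s => f s + h s) = fun _ => (0 : ℝ) := funext hdiv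
      rw [this, deriv_const]
    have h2 := hode t
    rw [hd] at h2
    have hf0 : f t ^ 2 = 0 ∧ h t ^ 2 = 0 := by
      constructor <;> nlinarith [sq_nonneg (f t), sq_nonneg (h t)]
    exact ⟨pow_eq_zero_iff (n := 2) (by norm_num) |>.mp hf0.1,
           pow_eq_zero_iff (n := 2) (by norm_num) |>.mp hf0.2⟩
  refine ⟨hzero, fun t => ?_⟩
  have hfe : f = fun _ => (0 : ℝ) := funext fun s => (hzero s).1
  have hhe : h = fun _ => (0 : ℝ) := funext fun s => (hzero s).2
  constructor
  · rw [hK12 t, hfe, deriv_const]; norm_num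
  · rw [hK13 t, hhe, deriv_const]; norm_num
end

section
/- Let $V$ be a continuous section of trace-free symmetric endomorphisms of the tangent bundle of the 2-sphere $S^2$, i.e., a continuous map assigning to each $v \in S^2$ a symmetric trace-free endomorphism $u(v)$ of $T_v S^2$. Then there exists $v_0 \in S^2$ with $u(v_0) = 0$. -/
open scoped RealInnerProductSpace
open Complex ComplexConjugate Module
open scoped Real

/-!
In an orthonormal frame `(e₁, e₂)` of a tangent plane, a trace-free symmetric endomorphism has
matrix `[[a, b], [b, -a]]`; record it as `a + b i`. Rotating the frame by `w` multiplies this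
number by `conj w ^ 2`. Cover `S²` by the two stereographic charts, related by `w = (conj z)⁻¹`,
with frames that differ by the rotation `z / conj z`; a field without zeros then gives continuous
nowhere-vanishing `f, g : ℂ → ℂ` with `g (conj z)⁻¹ = (conj z / z) ^ 2 * f z`. Since `ℂ` is
simply connected, `f = exp φ` with `φ` continuous, so the argument of `f` has no net change along
a circle; but on a large circle `f z` stays close to `(z / conj z) ^ 2 * g 0`, whose argument
changes by `8π`.
-/

theorem abs_sub_lt_pi_of_cos_pos {χ : ℝ → ℝ} (hχ : Continuous χ)
    (hcos : ∀ t, 0 < Real.cos (χ t)) (a b : ℝ) : |χ b - χ a| < π := by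
  have hpos : ∀ y ∈ Set.uIcc (χ a) (χ b), 0 < Real.cos y := by
    intro y hy
    obtain ⟨t, -, rfl⟩ := intermediate_value_uIcc hχ.continuousOn hy
    exact hcos t
  have ha := hcos a
  rw [abs_sub_lt_iff]
  constructor <;> by_contra! h
  · have := hpos (χ a + π) (Set.mem_uIcc.mpr (.inl ⟨by linarith [Real.pi_pos], by linarith⟩))
    rw [Real.cos_add_pi] at this
    linarith
  · have := hpos (χ a - π) (Set.mem_uIcc.mpr (.inr ⟨by linarith, by linarith [Real.pi_pos]⟩))
    rw [Real.cos_sub_pi] at this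
    linarith

namespace Complex

theorem re_pos_of_norm_sub_one_lt {z : ℂ} (h : ‖z - 1‖ < 1) : 0 < z.re := by
  have := abs_re_le_norm (z - 1)
  rw [sub_re, one_re] at this
  linarith [neg_abs_le (z.re - 1)]

theorem exists_norm_le_norm_exp_add_sub {ψ : ℝ → ℂ} (hψ : Continuous ψ)
    (hper : ψ (2 * π) = ψ 0) {m : ℤ} (hm : m ≠ 0) (c : ℂ) :
    ∃ θ : ℝ, ‖c‖ ≤ ‖exp (ψ θ + m * θ * I) - c‖ := by
  by_contra! hclose
  have hc : c ≠ 0 := fun h => (norm_nonneg _).not_gt (by simpa [h] using hclose 0)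
  set χ : ℝ → ℝ := fun θ => (ψ θ).im + m * θ - arg c
  have hcos : ∀ θ, 0 < Real.cos (χ θ) := by
    intro θ
    have hre : 0 < (exp (ψ θ + m * θ * I) / c).re := by
      apply re_pos_of_norm_sub_one_lt
      rw [div_sub_one hc, norm_div, div_lt_one (norm_pos_iff.mpr hc)]
      exact hclose θ
    have hquot : exp (ψ θ + m * θ * I) / c = exp (ψ θ + m * θ * I - log c) := by
      rw [exp_sub, exp_log hc]
    have him : (ψ θ + m * θ * I - log c).im = χ θ := by simp [χ, log_im]
    rw [hquot, exp_re, him] at hre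
    exact pos_of_mul_pos_right hre (Real.exp_pos _).le
  have hlt := abs_sub_lt_pi_of_cos_pos (by fun_prop) hcos 0 (2 * π)
  have hdiff : χ (2 * π) - χ 0 = 2 * π * m := by simp only [χ, hper]; ring
  rw [hdiff, abs_mul, abs_of_pos Real.two_pi_pos] at hlt
  have : (1 : ℝ) ≤ |(m : ℝ)| := by exact_mod_cast Int.one_le_abs hm
  nlinarith [Real.pi_pos]

theorem _root_.Continuous.exists_exp_eq {f : ℂ → ℂ} (hf : Continuous f) (hf0 : ∀ z, f z ≠ 0) :
    ∃ φ : ℂ → ℂ, Continuous φ ∧ ∀ z, exp (φ z) = f z := by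
  obtain ⟨φ, -, hφ⟩ := (isCoveringMapOn_exp.existsUnique_continuousMap_lifts ⟨f, hf⟩
    (a₀ := 0) (exp_log (hf0 0)) hf0).exists
  exact ⟨φ, φ.continuous, congrFun hφ⟩

theorem conj_circleMap_div_circleMap {R : ℝ} (hR : R ≠ 0) (θ : ℝ) :
    conj (circleMap 0 R θ) / circleMap 0 R θ = exp (-2 * θ * I) := by
  rw [circleMap_zero, map_mul, conj_ofReal, ← exp_conj, map_mul, conj_ofReal, conj_I,
    mul_div_mul_left _ _ (ofReal_ne_zero.mpr hR), ← exp_sub]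
  ring_nf

theorem exists_norm_le_norm_conj_div_pow_mul_sub {f : ℂ → ℂ} (hf : Continuous f)
    (hf0 : ∀ z, f z ≠ 0) {n : ℕ} (hn : n ≠ 0) (c : ℂ) {R : ℝ} (hR : 0 < R) :
    ∃ z : ℂ, ‖z‖ = R ∧ ‖c‖ ≤ ‖(conj z / z) ^ n * f z - c‖ := by
  obtain ⟨φ, hφ, hexp⟩ := hf.exists_exp_eq hf0
  obtain ⟨θ, hθ⟩ := exists_norm_le_norm_exp_add_sub (ψ := fun θ => φ (circleMap 0 R θ))
    (by fun_prop) (by rw [(periodic_circleMap 0 R).eq]) (m := -(2 * n)) (by omega) c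
  refine ⟨circleMap 0 R θ, by rw [norm_circleMap_zero, abs_of_pos hR], ?_⟩
  rw [conj_circleMap_div_circleMap hR.ne', ← hexp, ← exp_nat_mul, ← exp_add]
  convert hθ using 4
  push_cast
  ring

/-- `f` and `g` are the two local expressions of a section of a complex line bundle over the
Riemann sphere of degree `2 n ≠ 0`. -/
theorem exists_eq_zero_or_eq_zero_of_transition {f g : ℂ → ℂ} (hf : Continuous f)
    (hg : Continuous g) {n : ℕ} (hn : n ≠ 0)
    (hfg : ∀ z ≠ 0, g (conj z)⁻¹ = (conj z / z) ^ n * f z) :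
    (∃ z, f z = 0) ∨ g 0 = 0 := by
  by_contra! ⟨hf0, hg0⟩
  obtain ⟨δ, hδ, hgδ⟩ :=
    Metric.continuousAt_iff.mp hg.continuousAt ‖g 0‖ (norm_pos_iff.mpr hg0)
  obtain ⟨z, hzR, hz⟩ :=
    exists_norm_le_norm_conj_div_pow_mul_sub hf hf0 hn (g 0) (R := 2 / δ) (by positivity)
  have hz0 : z ≠ 0 := by
    rintro rfl
    exact (div_ne_zero two_ne_zero hδ.ne') (by simpa using hzR.symm)
  rw [← hfg z hz0, ← dist_eq] at hz
  refine hz.not_gt (hgδ ?_)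
  rw [dist_zero_right, norm_inv, norm_conj, hzR, inv_div]
  linarith

end Complex

section FrameCoord

variable {E : Type*} [NormedAddCommGroup E] [InnerProductSpace ℝ E]

theorem Orthonormal.exists_orthonormalBasis_coe_eq {ι : Type*} [Fintype ι] [Nonempty ι]
    {v : ι → E} (hv : Orthonormal ℝ v) (hcard : Fintype.card ι = finrank ℝ E) :
    ∃ b : OrthonormalBasis ι ℝ E, ⇑b = v :=
  ⟨(basisOfOrthonormalOfCardEqFinrank hv hcard).toOrthonormalBasis (by simpa using hv),
    by simp⟩

noncomputable def frameCoord (A : E →ₗ[ℝ] E) (e₁ e₂ : E) : ℂ := ⟨⟪A e₁, e₁⟫, ⟪A e₁, e₂⟫⟩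

theorem frameCoord_eq_zero_iff {A : E →ₗ[ℝ] E} {e₁ e₂ : E} :
    frameCoord A e₁ e₂ = 0 ↔ ⟪A e₁, e₁⟫ = 0 ∧ ⟪A e₁, e₂⟫ = 0 :=
  Complex.ext_iff

theorem Continuous.frameCoord {X : Type*} [TopologicalSpace X] {A : X → E →L[ℝ] E}
    {e₁ e₂ : X → E} (hA : Continuous A) (h₁ : Continuous e₁) (h₂ : Continuous e₂) :
    Continuous fun x => _root_.frameCoord (A x : E →ₗ[ℝ] E) (e₁ x) (e₂ x) :=
  equivRealProdCLM.symm.continuous.comp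
    (((hA.clm_apply h₁).inner h₁).prodMk ((hA.clm_apply h₁).inner h₂))

theorem frameCoord_rotate {A : E →ₗ[ℝ] E} (hA : A.IsSymmetric) {e₁ e₂ : E}
    (htr : ⟪A e₂, e₂⟫ = -⟪A e₁, e₁⟫) (w : ℂ) :
    frameCoord A (w.re • e₁ + w.im • e₂) (-w.im • e₁ + w.re • e₂)
      = conj w ^ 2 * frameCoord A e₁ e₂ := by
  have h21 : ⟪A e₂, e₁⟫ = ⟪A e₁, e₂⟫ := by rw [hA, real_inner_comm]
  apply Complex.ext <;>
  · simp only [frameCoord, map_add, map_smul, inner_add_left, inner_add_right,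
      real_inner_smul_left, real_inner_smul_right, h21, htr, sq, mul_re, mul_im, conj_re, conj_im]
    ring

theorem trace_eq_inner_add_inner (b : OrthonormalBasis (Fin 3) ℝ E) {A : E →ₗ[ℝ] E}
    (h0 : A (b 0) = 0) : LinearMap.trace ℝ E A = ⟪A (b 1), b 1⟫ + ⟪A (b 2), b 2⟫ := by
  rw [LinearMap.trace_eq_sum_inner A b, Fin.sum_univ_three, h0, inner_zero_right, zero_add,
    real_inner_comm (b 1), real_inner_comm (b 2)]

variable {v : Fin 3 → E} (hv : Orthonormal ℝ v) (hE : finrank ℝ E = 3) {A : E →ₗ[ℝ] E}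
  (hA : A.IsSymmetric) (h0 : A (v 0) = 0) (htr : LinearMap.trace ℝ E A = 0)
include hv hE hA h0 htr

theorem frameCoord_ne_zero (hA0 : A ≠ 0) : frameCoord A (v 1) (v 2) ≠ 0 := by
  obtain ⟨b, rfl⟩ := hv.exists_orthonormalBasis_coe_eq (by simp [hE])
  intro hcoord
  obtain ⟨h11, h12⟩ := frameCoord_eq_zero_iff.mp hcoord
  have h22 : ⟪A (b 2), b 2⟫ = 0 := by linarith [trace_eq_inner_add_inner b h0]
  have hi0 : ∀ i, ⟪A (b i), b 0⟫ = 0 := fun i => by rw [hA, h0, inner_zero_right]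
  have h21 : ⟪A (b 2), b 1⟫ = 0 := by rw [hA, real_inner_comm, h12]
  refine hA0 (b.toBasis.ext fun i => InnerProductSpace.ext_inner_right_basis b.toBasis fun j => ?_)
  simp only [OrthonormalBasis.coe_toBasis, LinearMap.zero_apply, inner_zero_left]
  fin_cases i <;> fin_cases j <;> simp [h0, h11, h12, h21, h22, hi0]

theorem frameCoord_rotate_of_orthonormal (w : ℂ) :
    frameCoord A (w.re • v 1 + w.im • v 2) (-w.im • v 1 + w.re • v 2)
      = conj w ^ 2 * frameCoord A (v 1) (v 2) := by
  obtain ⟨b, rfl⟩ := hv.exists_orthonormalBasis_coe_eq (by simp [hE])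
  exact frameCoord_rotate hA (by linarith [trace_eq_inner_add_inner b h0]) w

end FrameCoord

theorem EuclideanSpace.inner_vec_three (a b c d e f : ℝ) :
    ⟪!₂[a, b, c], !₂[d, e, f]⟫ = a * d + b * e + c * f := by
  simp [PiLp.inner_apply, Fin.sum_univ_three, mul_comm]

/-- The inverse stereographic projection of `z` from the north pole, followed by the normalised
partial derivatives in `z.re` and `z.im`. -/
noncomputable def southFrame (z : ℂ) : Fin 3 → EuclideanSpace ℝ (Fin 3) :=
  let x := z.re; let y := z.im; let D := 1 + x ^ 2 + y ^ 2
  ![!₂[2 * x / D, 2 * y / D, (x ^ 2 + y ^ 2 - 1) / D],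
    !₂[(1 - x ^ 2 + y ^ 2) / D, -(2 * x * y) / D, 2 * x / D],
    !₂[-(2 * x * y) / D, (1 + x ^ 2 - y ^ 2) / D, 2 * y / D]]

/-- The inverse stereographic projection of `w` from the south pole, followed by the normalised
partial derivatives in `w.re` (negated, so that the two frames differ by a rotation) and
`w.im`. -/
noncomputable def northFrame (w : ℂ) : Fin 3 → EuclideanSpace ℝ (Fin 3) :=
  let s := w.re; let t := w.im; let D := 1 + s ^ 2 + t ^ 2
  ![!₂[2 * s / D, 2 * t / D, (1 - s ^ 2 - t ^ 2) / D],
    !₂[-(1 - s ^ 2 + t ^ 2) / D, 2 * s * t / D, 2 * s / D],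
    !₂[-(2 * s * t) / D, (1 + s ^ 2 - t ^ 2) / D, -(2 * t) / D]]

theorem orthonormal_southFrame (z : ℂ) : Orthonormal ℝ (southFrame z) := by
  have hD : 1 + z.re ^ 2 + z.im ^ 2 ≠ 0 := by positivity
  rw [orthonormal_iff_ite]
  intro i j
  fin_cases i <;> fin_cases j <;>
    simp [southFrame, EuclideanSpace.inner_vec_three, -inner_self_eq_norm_sq_to_K] <;>
    field_simp <;> ring

theorem orthonormal_northFrame (w : ℂ) : Orthonormal ℝ (northFrame w) := by
  have hD : 1 + w.re ^ 2 + w.im ^ 2 ≠ 0 := by positivity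
  rw [orthonormal_iff_ite]
  intro i j
  fin_cases i <;> fin_cases j <;>
    simp [northFrame, EuclideanSpace.inner_vec_three, -inner_self_eq_norm_sq_to_K] <;>
    field_simp <;> ring

theorem continuous_southFrame (i : Fin 3) : Continuous fun z => southFrame z i := by
  have hD : ∀ z : ℂ, 1 + z.re ^ 2 + z.im ^ 2 ≠ 0 := fun z => by positivity
  fin_cases i <;> simp [southFrame] <;> fun_prop (disch := exact hD _)

theorem continuous_northFrame (i : Fin 3) : Continuous fun w => northFrame w i := by
  have hD : ∀ w : ℂ, 1 + w.re ^ 2 + w.im ^ 2 ≠ 0 := fun w => by positivity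
  fin_cases i <;> simp [northFrame] <;> fun_prop (disch := exact hD _)

theorem northFrame_inv_conj {z : ℂ} (hz : z ≠ 0) :
    northFrame (conj z)⁻¹ = ![southFrame z 0,
      (z / conj z).re • southFrame z 1 + (z / conj z).im • southFrame z 2,
      -(z / conj z).im • southFrame z 1 + (z / conj z).re • southFrame z 2] := by
  have hD : 1 + z.re ^ 2 + z.im ^ 2 ≠ 0 := by positivity
  have hr : z.re ^ 2 + z.im ^ 2 ≠ 0 := by
    simpa [normSq_apply, sq] using (normSq_pos.mpr hz).ne'
  funext i
  ext j
  fin_cases i <;> fin_cases j <;>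
    simp [northFrame, southFrame, div_re, div_im, inv_re, inv_im, normSq_apply] <;>
    field_simp <;> ring

/-- A continuous field of trace-free symmetric endomorphisms of the tangent
bundle of `S²` vanishes somewhere.  Here `T_v S²` is modelled as
`v^⊥ ⊆ ℝ³`: for each unit vector `v`, `u v` is a symmetric endomorphism of
`ℝ³` killing `v` (hence, by symmetry, preserving `v^⊥`, i.e. an endomorphism
of `T_v S²`) whose trace (= its trace on `v^⊥`) is zero. -/
theorem stmt15
    (u : EuclideanSpace ℝ (Fin 3) →
      (EuclideanSpace ℝ (Fin 3) →L[ℝ] EuclideanSpace ℝ (Fin 3)))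
    (hcont : ContinuousOn u (Metric.sphere (0 : EuclideanSpace ℝ (Fin 3)) 1))
    (hsym : ∀ v ∈ Metric.sphere (0 : EuclideanSpace ℝ (Fin 3)) 1,
      ∀ x y, ⟪u v x, y⟫ = ⟪x, u v y⟫)
    (hker : ∀ v ∈ Metric.sphere (0 : EuclideanSpace ℝ (Fin 3)) 1, u v v = 0)
    (htr : ∀ v ∈ Metric.sphere (0 : EuclideanSpace ℝ (Fin 3)) 1,
      LinearMap.trace ℝ _ (u v : EuclideanSpace ℝ (Fin 3) →ₗ[ℝ] EuclideanSpace ℝ (Fin 3)) = 0) :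
    ∃ v₀ ∈ Metric.sphere (0 : EuclideanSpace ℝ (Fin 3)) 1, u v₀ = 0 := by
  by_contra! hne
  have hmem {v : Fin 3 → EuclideanSpace ℝ (Fin 3)} (hv : Orthonormal ℝ v) :
      v 0 ∈ Metric.sphere 0 1 := mem_sphere_zero_iff_norm.mpr (hv.1 0)
  have hfin : finrank ℝ (EuclideanSpace ℝ (Fin 3)) = 3 := by simp
  have hcoord {v : Fin 3 → EuclideanSpace ℝ (Fin 3)} (hv : Orthonormal ℝ v) :
      frameCoord (u (v 0) : _ →ₗ[ℝ] _) (v 1) (v 2) ≠ 0 :=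
    frameCoord_ne_zero hv hfin (hsym _ (hmem hv)) (hker _ (hmem hv)) (htr _ (hmem hv))
      (fun h => hne _ (hmem hv) (ContinuousLinearMap.coe_injective h))
  set f := fun z => frameCoord (u (southFrame z 0) : _ →ₗ[ℝ] _) (southFrame z 1) (southFrame z 2)
  set g := fun w => frameCoord (u (northFrame w 0) : _ →ₗ[ℝ] _) (northFrame w 1) (northFrame w 2)
  have hfg (z : ℂ) (hz : z ≠ 0) : g (conj z)⁻¹ = (conj z / z) ^ 2 * f z := by
    have hv := orthonormal_southFrame z
    simp only [g, f, northFrame_inv_conj hz, Matrix.cons_val_zero, Matrix.cons_val_one,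
      Matrix.cons_val_two, Matrix.head_cons, Matrix.tail_cons,
      frameCoord_rotate_of_orthonormal hv hfin (hsym _ (hmem hv)) (hker _ (hmem hv))
        (htr _ (hmem hv)), map_div₀, conj_conj]
  have hf : Continuous f := (hcont.comp_continuous (continuous_southFrame 0)
    fun z => hmem (orthonormal_southFrame z)).frameCoord
    (continuous_southFrame 1) (continuous_southFrame 2)
  have hg : Continuous g := (hcont.comp_continuous (continuous_northFrame 0)
    fun w => hmem (orthonormal_northFrame w)).frameCoord
    (continuous_northFrame 1) (continuous_northFrame 2)
  rcases exists_eq_zero_or_eq_zero_of_transition hf hg two_ne_zero hfg with ⟨z, hz⟩ | h0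
  · exact hcoord (orthonormal_southFrame z) hz
  · exact hcoord (orthonormal_northFrame 0) h0
end
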